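/- arXiv:2503.20488 — 3 statements merged into one kernel-verified Lean document; each statement's English description precedes it below -/
import Mathlib

section
/- If at each iteration of the diffusion algorithm every nonzero selected entry γ_i satisfies γ_i ≥ ε·d(i), and the total reserve never exceeds ‖f‖_1, then the total degree-weighted work Σ_ℓ Σ_{i ∈ supp(γ^{(ℓ)})} d(i) is at most ‖f‖_1 / ((1−α)ε). -/
/-!
Each push moves the mass `γ` out of the residual and returns only `α ∑ γ` of it (`P` is
row-stochastic), so the residual mass drops by `(1 - α) ∑ γ` while staying nonnegative.
Hence the selected masses sum to at most `‖f‖₁ / (1 - α)` over all iterations, and the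
threshold `γ i ≥ ε d(i)` charges the work `d(i)` of every selected entry to that mass.
-/

open Finset Matrix

theorem Matrix.sum_vecMul_of_mem_rowStochastic {R n : Type*} [Fintype n] [DecidableEq n]
    [Semiring R] [PartialOrder R] [IsOrderedRing R] {M : Matrix n n R}
    (hM : M ∈ rowStochastic R n) (x : n → R) : ∑ i, (x ᵥ* M) i = ∑ i, x i := by
  rw [← dotProduct_one, ← dotProduct_mulVec, one_vecMul_of_mem_rowStochastic hM, dotProduct_one]

theorem mul_sum_support_le_sum {ι : Type*} [Fintype ι] {ε : ℝ} {d γ : ι → ℝ}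
    (hthresh : ∀ i, γ i ≠ 0 → ε * d i ≤ γ i) :
    ε * ∑ i ∈ univ.filter (fun i => γ i ≠ 0), d i ≤ ∑ i, γ i := by
  rw [mul_sum]
  calc _ ≤ ∑ i ∈ univ.filter (fun i => γ i ≠ 0), γ i :=
        sum_le_sum fun i hi => hthresh i (mem_filter.mp hi).2
    _ = ∑ i, γ i := sum_filter_ne_zero _

namespace GreedyDiffuse

variable {ι : Type*} [Fintype ι] [DecidableEq ι] {P : Matrix ι ι ℝ} {α : ℝ}

def pushStep (P : Matrix ι ι ℝ) (α : ℝ) (r γ : ι → ℝ) : ι → ℝ :=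
  r - γ + α • γ ᵥ* P

theorem pushStep_nonneg (hP : P ∈ rowStochastic ℝ ι) (hα : 0 ≤ α) {r γ : ι → ℝ}
    (hγ : 0 ≤ γ) (hγr : γ ≤ r) : 0 ≤ pushStep P α r γ :=
  add_nonneg (sub_nonneg.2 hγr)
    (smul_nonneg hα (nonneg_vecMul_of_mem_rowStochastic hP hγ))

theorem sum_pushStep (hP : P ∈ rowStochastic ℝ ι) (r γ : ι → ℝ) :
    ∑ i, pushStep P α r γ i = ∑ i, r i - (1 - α) * ∑ i, γ i := by
  simp only [pushStep, Pi.add_apply, Pi.sub_apply, Pi.smul_apply, smul_eq_mul,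
    sum_add_distrib, sum_sub_distrib, ← mul_sum, sum_vecMul_of_mem_rowStochastic hP]
  ring

variable {r γ : ℕ → ι → ℝ}

theorem residual_nonneg (hP : P ∈ rowStochastic ℝ ι) (hα : 0 ≤ α)
    (hrec : ∀ ℓ, r (ℓ + 1) = pushStep P α (r ℓ) (γ ℓ)) (hr0 : 0 ≤ r 0)
    (hγ : ∀ ℓ, 0 ≤ γ ℓ) (hγr : ∀ ℓ, γ ℓ ≤ r ℓ) : ∀ ℓ, 0 ≤ r ℓ
  | 0 => hr0
  | ℓ + 1 => hrec ℓ ▸ pushStep_nonneg hP hα (hγ ℓ) (hγr ℓ)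

theorem sum_residual_add_sum_pushed (hP : P ∈ rowStochastic ℝ ι)
    (hrec : ∀ ℓ, r (ℓ + 1) = pushStep P α (r ℓ) (γ ℓ)) (L : ℕ) :
    ∑ i, r L i + (1 - α) * ∑ ℓ ∈ range L, ∑ i, γ ℓ i = ∑ i, r 0 i := by
  induction L with
  | zero => simp
  | succ L ih => rw [hrec, sum_pushStep hP, sum_range_succ, ← ih]; ring

theorem mul_sum_pushed_le (hP : P ∈ rowStochastic ℝ ι) (hα : 0 ≤ α)
    (hrec : ∀ ℓ, r (ℓ + 1) = pushStep P α (r ℓ) (γ ℓ)) (hr0 : 0 ≤ r 0)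
    (hγ : ∀ ℓ, 0 ≤ γ ℓ) (hγr : ∀ ℓ, γ ℓ ≤ r ℓ) (L : ℕ) :
    (1 - α) * ∑ ℓ ∈ range L, ∑ i, γ ℓ i ≤ ∑ i, r 0 i := by
  rw [← sum_residual_add_sum_pushed hP hrec L]
  have := sum_nonneg fun i (_ : i ∈ univ) => residual_nonneg hP hα hrec hr0 hγ hγr L i
  linarith

end GreedyDiffuse

theorem greedy_diffuse_work_bound_general {n : ℕ} (P : Matrix (Fin n) (Fin n) ℝ)
    (hPnonneg : ∀ i j, 0 ≤ P i j) (hProw : ∀ i, ∑ j, P i j = 1)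
    (α : ℝ) (hα : α ∈ Set.Ioo (0 : ℝ) 1) (ε : ℝ) (hε : 0 < ε)
    (d : Fin n → ℝ)
    (f : Fin n → ℝ) (hf : ∀ i, 0 ≤ f i)
    (r γ : ℕ → Fin n → ℝ)
    (hr0 : r 0 = f)
    (hγ : ∀ ℓ i, 0 ≤ γ ℓ i ∧ γ ℓ i ≤ r ℓ i)
    (hthresh : ∀ ℓ i, γ ℓ i ≠ 0 → ε * d i ≤ γ ℓ i)
    (hrrec : ∀ ℓ, r (ℓ + 1) = r ℓ - γ ℓ + α • Matrix.vecMul (γ ℓ) P) :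
    ∀ L, ∑ ℓ ∈ Finset.range L,
        ∑ i ∈ Finset.univ.filter (fun i => γ ℓ i ≠ 0), d i ≤
      (∑ i, f i) / ((1 - α) * ε) := by
  intro L
  have hP : P ∈ rowStochastic ℝ (Fin n) := mem_rowStochastic_iff_sum.2 ⟨hPnonneg, hProw⟩
  have h1α : 0 < 1 - α := sub_pos.2 hα.2
  have hpushed := GreedyDiffuse.mul_sum_pushed_le hP hα.1.le hrrec (hr0 ▸ hf)
    (fun ℓ i => (hγ ℓ i).1) (fun ℓ i => (hγ ℓ i).2) L
  rw [le_div_iff₀ (mul_pos h1α hε), ← hr0]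
  calc (∑ ℓ ∈ range L, ∑ i ∈ univ.filter (fun i => γ ℓ i ≠ 0), d i) * ((1 - α) * ε)
      = (1 - α) * ∑ ℓ ∈ range L, ε * ∑ i ∈ univ.filter (fun i => γ ℓ i ≠ 0), d i := by
        rw [mul_sum, sum_mul]; exact sum_congr rfl fun ℓ _ => by ring
    _ ≤ (1 - α) * ∑ ℓ ∈ range L, ∑ i, γ ℓ i := by
        gcongr with ℓ; exact mul_sum_support_le_sum (hthresh ℓ)
    _ ≤ ∑ i, r 0 i := hpushed

/-- Work bound for GreedyDiffuse: if at each iteration every nonzero selected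
residual entry satisfies `γ ℓ i ≥ ε * d i`, then the total degree-weighted work
`∑_ℓ ∑_{i ∈ supp(γ ℓ)} d i` is at most `‖f‖₁ / ((1-α) ε)`. -/
theorem greedy_diffuse_work_bound {n : ℕ} (P : Matrix (Fin n) (Fin n) ℝ)
    (hPnonneg : ∀ i j, 0 ≤ P i j) (hProw : ∀ i, ∑ j, P i j = 1)
    (α : ℝ) (hα : α ∈ Set.Ioo (0 : ℝ) 1) (ε : ℝ) (hε : 0 < ε)
    (d : Fin n → ℝ) (hdpos : ∀ i, 0 < d i)
    (f : Fin n → ℝ) (hf : ∀ i, 0 ≤ f i)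
    (r q γ : ℕ → Fin n → ℝ)
    (hr0 : r 0 = f) (hq0 : q 0 = 0)
    (hγ : ∀ ℓ i, 0 ≤ γ ℓ i ∧ γ ℓ i ≤ r ℓ i)
    (hthresh : ∀ ℓ i, γ ℓ i ≠ 0 → ε * d i ≤ γ ℓ i)
    (hqrec : ∀ ℓ, q (ℓ + 1) = q ℓ + (1 - α) • γ ℓ)
    (hrrec : ∀ ℓ, r (ℓ + 1) = r ℓ - γ ℓ + α • Matrix.vecMul (γ ℓ) P) :
    ∀ L, ∑ ℓ ∈ Finset.range L,
        ∑ i ∈ Finset.univ.filter (fun i => γ ℓ i ≠ 0), d i ≤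
      (∑ i, f i) / ((1 - α) * ε) :=
  greedy_diffuse_work_bound_general P hPnonneg hProw α hα ε hε d f hf r γ hr0 hγ hthresh hrrec
end

section
/- Let à = D^{-1/2} A D^{-1/2} be the symmetrically normalized adjacency matrix of a graph and L = I − à its normalized Laplacian. For α ∈ (0,1), the unique minimizer of the objective H ↦ (1−α)‖H − H°‖_F² + α·trace(H^T L H) over H ∈ ℝ^{n×k} is H = (1−α)(I − αÃ)^{-1} H° = Σ_{ℓ=0}^∞ (1−α)α^ℓ Ã^ℓ H°, where the Neumann series converges since the spectral radius of à is at most 1 and α < 1. -/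
/-!
With `M = (1 - α) I + α L = I - α Ã`, the objective is `tr (Hᵀ M H) - 2 tr (Hᵀ (1 - α) H°)` up to
an additive constant, so if `M H* = (1 - α) H°` it exceeds its value at `H*` by
`tr ((H - H*)ᵀ M (H - H*))`. Weighted Cauchy–Schwarz on the rows of `A` gives `‖Ã‖₂ ≤ 1`, hence
`‖α Ã‖₂ < 1`: this makes `M` positive definite, so the excess is positive for `H ≠ H*`, and makes
the Neumann series `∑ (α Ã)^ℓ` converge to `M⁻¹`.
-/

open Matrix

namespace Matrix

section QuadraticForm

variable {n m : Type*} [Fintype n] [Fintype m]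

lemma trace_transpose_sub_mul_mul_sub {R : Type*} [CommRing R] {M : Matrix n n R}
    (hM : M.IsSymm) (H X : Matrix n m R) :
    ((H - X)ᵀ * M * (H - X)).trace
      = (Hᵀ * M * H).trace - 2 * (Hᵀ * (M * X)).trace + (Xᵀ * M * X).trace := by
  have hcross : (Xᵀ * (M * H)).trace = (Hᵀ * (M * X)).trace := by
    rw [← trace_transpose, transpose_mul, transpose_mul, transpose_transpose, hM.eq,
      Matrix.mul_assoc]
  simp only [transpose_sub, Matrix.sub_mul, Matrix.mul_sub, trace_sub, Matrix.mul_assoc, hcross]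
  ring

lemma PosDef.trace_transpose_mul_mul_pos {M : Matrix n n ℝ} (hM : M.PosDef) {E : Matrix n m ℝ}
    (hE : E ≠ 0) : 0 < (Eᵀ * M * E).trace := by
  have hsum : (Eᵀ * M * E).trace = ∑ j, Eᵀ j ⬝ᵥ (M *ᵥ Eᵀ j) := by
    simp only [trace, diag, mul_apply, transpose_apply, dotProduct, mulVec, Finset.sum_mul,
      Finset.mul_sum, mul_assoc]
    exact Finset.sum_congr rfl fun j _ => Finset.sum_comm
  obtain ⟨j, hj⟩ : ∃ j, Eᵀ j ≠ 0 := by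
    by_contra! h
    exact hE (transpose_eq_zero.mp (funext h))
  rw [hsum]
  refine Finset.sum_pos' (fun j _ => ?_) ⟨j, Finset.mem_univ j, ?_⟩
  · simpa using hM.posSemidef.dotProduct_mulVec_nonneg (Eᵀ j)
  · simpa using hM.dotProduct_mulVec_pos hj

lemma trace_quadratic_lt_of_posDef {M : Matrix n n ℝ} (hM : M.PosDef) {B X : Matrix n m ℝ}
    (hX : M * X = B) {H : Matrix n m ℝ} (hHX : H ≠ X) :
    (Xᵀ * M * X).trace - 2 * (Xᵀ * B).trace < (Hᵀ * M * H).trace - 2 * (Hᵀ * B).trace := by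
  have hsymm : M.IsSymm := isHermitian_iff_isSymm.mp hM.isHermitian
  have hH := trace_transpose_sub_mul_mul_sub hsymm H X
  have hXX := trace_transpose_sub_mul_mul_sub hsymm X X
  have hpos := hM.trace_transpose_mul_mul_pos (sub_ne_zero.mpr hHX)
  simp only [sub_self, transpose_zero, Matrix.zero_mul, Matrix.mul_zero, trace_zero, hX] at hH hXX
  linarith

lemma sum_sq_eq_trace_transpose_mul_self (E : Matrix n m ℝ) :
    ∑ i, ∑ j, E i j ^ 2 = (Eᵀ * E).trace := by
  simp only [trace, diag, mul_apply, transpose_apply, sq]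
  exact Finset.sum_comm

end QuadraticForm

section NormalizedAdjacency

variable {ι : Type*} [Fintype ι]

noncomputable def normalizedAdjacency (A : Matrix ι ι ℝ) : Matrix ι ι ℝ :=
  of fun i j => A i j / (√(∑ k, A i k) * √(∑ k, A j k))

lemma normalizedAdjacency_isSymm {A : Matrix ι ι ℝ} (hA : A.IsSymm) :
    (normalizedAdjacency A).IsSymm :=
  IsSymm.ext fun i j => by simp only [normalizedAdjacency, of_apply, hA.apply i j, mul_comm]

lemma sq_normalizedAdjacency_mulVec_apply_le {A : Matrix ι ι ℝ} (hA : ∀ i j, 0 ≤ A i j)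
    (hdeg : ∀ i, 0 < ∑ j, A i j) (x : ι → ℝ) (i : ι) :
    (normalizedAdjacency A *ᵥ x) i ^ 2 ≤ ∑ j, A i j * (x j ^ 2 / ∑ k, A j k) := by
  set d : ι → ℝ := fun i => ∑ j, A i j
  have hsqrt : ∀ j, √(d j) ^ 2 = d j := fun j => Real.sq_sqrt (hdeg j).le
  have hrow : (normalizedAdjacency A *ᵥ x) i = (∑ j, A i j * (x j / √(d j))) / √(d i) := by
    simp only [mulVec, dotProduct, normalizedAdjacency, of_apply, Finset.sum_div]
    refine Finset.sum_congr rfl fun j _ => ?_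
    ring
  have hCS : (∑ j, A i j * (x j / √(d j))) ^ 2 ≤ d i * ∑ j, A i j * (x j ^ 2 / d j) :=
    Finset.sum_sq_le_sum_mul_sum_of_sq_le_mul _ (fun j _ => hA i j)
      (fun j _ => mul_nonneg (hA i j) (div_nonneg (sq_nonneg _) (hdeg j).le))
      fun j _ => by rw [mul_pow, div_pow, hsqrt, sq (A i j), mul_assoc]
  rw [hrow, div_pow, hsqrt, div_le_iff₀ (hdeg i), mul_comm]
  exact hCS

lemma sum_sq_normalizedAdjacency_mulVec_le {A : Matrix ι ι ℝ} (hA : ∀ i j, 0 ≤ A i j)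
    (hsymm : A.IsSymm) (hdeg : ∀ i, 0 < ∑ j, A i j) (x : ι → ℝ) :
    ∑ i, (normalizedAdjacency A *ᵥ x) i ^ 2 ≤ ∑ i, x i ^ 2 :=
  calc ∑ i, (normalizedAdjacency A *ᵥ x) i ^ 2
      ≤ ∑ i, ∑ j, A i j * (x j ^ 2 / ∑ k, A j k) :=
        Finset.sum_le_sum fun i _ => sq_normalizedAdjacency_mulVec_apply_le hA hdeg x i
    _ = ∑ j, (∑ i, A j i) * (x j ^ 2 / ∑ k, A j k) := by
        rw [Finset.sum_comm]
        simp only [← Finset.sum_mul, hsymm.apply]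
    _ = ∑ j, x j ^ 2 :=
        Finset.sum_congr rfl fun j _ => mul_div_cancel₀ _ (hdeg j).ne'

section L2OpNorm

open scoped Matrix.Norms.L2Operator

variable [DecidableEq ι]

lemma l2_opNorm_normalizedAdjacency_le_one {A : Matrix ι ι ℝ} (hA : ∀ i j, 0 ≤ A i j)
    (hsymm : A.IsSymm) (hdeg : ∀ i, 0 < ∑ j, A i j) : ‖normalizedAdjacency A‖ ≤ 1 := by
  rw [l2_opNorm_def]
  refine ContinuousLinearMap.opNorm_le_bound _ zero_le_one fun x => ?_
  rw [one_mul, ← sq_le_sq₀ (norm_nonneg _) (norm_nonneg _), EuclideanSpace.real_norm_sq_eq,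
    EuclideanSpace.real_norm_sq_eq]
  exact sum_sq_normalizedAdjacency_mulVec_le hA hsymm hdeg x

lemma l2_opNorm_smul_normalizedAdjacency_lt_one {A : Matrix ι ι ℝ} (hA : ∀ i j, 0 ≤ A i j)
    (hsymm : A.IsSymm) (hdeg : ∀ i, 0 < ∑ j, A i j) {α : ℝ} (hα : |α| < 1) :
    ‖α • normalizedAdjacency A‖ < 1 :=
  calc ‖α • normalizedAdjacency A‖ = |α| * ‖normalizedAdjacency A‖ := by
        rw [norm_smul, Real.norm_eq_abs]
    _ ≤ |α| * 1 := by gcongr; exact l2_opNorm_normalizedAdjacency_le_one hA hsymm hdeg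
    _ < 1 := by rwa [mul_one]

lemma posDef_one_sub_of_l2_opNorm_lt_one {T : Matrix ι ι ℝ} (hT : T.IsSymm) (hnorm : ‖T‖ < 1) :
    (1 - T).PosDef := by
  refine posDef_iff_dotProduct_mulVec.mpr ⟨isHermitian_iff_isSymm.mpr (isSymm_one.sub hT),
    fun x hx => ?_⟩
  set v : EuclideanSpace ℝ ι := WithLp.toLp 2 x
  have hv : 0 < ‖v‖ := norm_pos_iff.mpr (by simpa [v] using hx)
  have hxx : x ⬝ᵥ x = ‖v‖ ^ 2 := by
    rw [EuclideanSpace.real_norm_sq_eq]; simp [v, dotProduct, sq]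
  have hxTx : x ⬝ᵥ (T *ᵥ x) ≤ ‖T‖ * ‖v‖ ^ 2 :=
    calc x ⬝ᵥ (T *ᵥ x) = inner ℝ v (WithLp.toLp 2 (T *ᵥ x)) := by
          simp [v, EuclideanSpace.inner_toLp_toLp, dotProduct_comm]
      _ ≤ ‖v‖ * ‖(WithLp.toLp 2 (T *ᵥ x) : EuclideanSpace ℝ ι)‖ := real_inner_le_norm _ _
      _ ≤ ‖v‖ * (‖T‖ * ‖v‖) := by gcongr; exact l2_opNorm_mulVec T v
      _ = ‖T‖ * ‖v‖ ^ 2 := by ring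
  have hlt : ‖T‖ * ‖v‖ ^ 2 < ‖v‖ ^ 2 := mul_lt_of_lt_one_left (pow_pos hv 2) hnorm
  rw [star_trivial, sub_mulVec, one_mulVec, dotProduct_sub, hxx]
  linarith

theorem hasSum_pow_mul_of_l2_opNorm_lt_one {κ : Type*} {T : Matrix ι ι ℝ} (hT : ‖T‖ < 1)
    (B : Matrix ι κ ℝ) : HasSum (fun ℓ : ℕ => T ^ ℓ * B) ((1 - T)⁻¹ * B) := by
  rw [nonsing_inv_eq_ringInverse]
  exact (hasSum_geom_series_inverse T hT).map
    (AddMonoidHom.mk' (· * B) fun X Y => Matrix.add_mul X Y B)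
    (continuous_id.matrix_mul continuous_const)

end L2OpNorm

variable [DecidableEq ι]

lemma posDef_one_sub_smul_normalizedAdjacency {A : Matrix ι ι ℝ} (hA : ∀ i j, 0 ≤ A i j)
    (hsymm : A.IsSymm) (hdeg : ∀ i, 0 < ∑ j, A i j) {α : ℝ} (hα : |α| < 1) :
    (1 - α • normalizedAdjacency A).PosDef :=
  posDef_one_sub_of_l2_opNorm_lt_one ((normalizedAdjacency_isSymm hsymm).smul α)
    (l2_opNorm_smul_normalizedAdjacency_lt_one hA hsymm hdeg hα)

lemma hasSum_smul_normalizedAdjacency_pow_mul {κ : Type*} {A : Matrix ι ι ℝ}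
    (hA : ∀ i j, 0 ≤ A i j) (hsymm : A.IsSymm) (hdeg : ∀ i, 0 < ∑ j, A i j) {α : ℝ}
    (hα : |α| < 1) (B : Matrix ι κ ℝ) :
    HasSum (fun ℓ : ℕ => (α • normalizedAdjacency A) ^ ℓ * B)
      ((1 - α • normalizedAdjacency A)⁻¹ * B) :=
  hasSum_pow_mul_of_l2_opNorm_lt_one
    (l2_opNorm_smul_normalizedAdjacency_lt_one hA hsymm hdeg hα) B

end NormalizedAdjacency

end Matrix

lemma denoising_objective_eq {n m : Type*} [Fintype n] [Fintype m] [DecidableEq n] (α : ℝ)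
    (L : Matrix n n ℝ) (H H0 : Matrix n m ℝ) :
    (1 - α) * ∑ i, ∑ j, (H i j - H0 i j) ^ 2 + α * (Hᵀ * L * H).trace
      = (Hᵀ * ((1 - α) • 1 + α • L) * H).trace - 2 * (Hᵀ * ((1 - α) • H0)).trace
        + (1 - α) * (H0ᵀ * H0).trace := by
  have hsq := trace_transpose_sub_mul_mul_sub isSymm_one H H0
  simp only [Matrix.mul_one, Matrix.one_mul] at hsq
  simp only [← Matrix.sub_apply, sum_sq_eq_trace_transpose_mul_self, hsq, Matrix.mul_add,
    Matrix.add_mul, Matrix.mul_smul, Matrix.smul_mul, Matrix.mul_one, trace_add, trace_smul,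
    smul_eq_mul]
  ring

/-- Closed-form solution of graph signal denoising: with
`Ã = D^{-1/2} A D^{-1/2}` the symmetrically normalized adjacency matrix,
`L = I - Ã` the normalized Laplacian, and `α ∈ (0,1)`, the unique minimizer of
`H ↦ (1-α) ‖H - H°‖_F² + α trace(Hᵀ L H)` over `H ∈ ℝ^{n×k}` is
`H* = (1-α)(I - αÃ)⁻¹ H° = ∑_{ℓ≥0} (1-α) α^ℓ Ã^ℓ H°`. -/
theorem gnn_denoising_closed_form {n k : ℕ}
    (A : Matrix (Fin n) (Fin n) ℝ)
    (hsymm : A.IsSymm) (h01 : ∀ i j, A i j = 0 ∨ A i j = 1)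
    (d : Fin n → ℝ) (hd : ∀ i, d i = ∑ j, A i j) (hdpos : ∀ i, 0 < d i)
    (Atil : Matrix (Fin n) (Fin n) ℝ)
    (hAtil : ∀ i j, Atil i j = A i j / (Real.sqrt (d i) * Real.sqrt (d j)))
    (L : Matrix (Fin n) (Fin n) ℝ) (hL : L = 1 - Atil)
    (α : ℝ) (hα : α ∈ Set.Ioo (0 : ℝ) 1)
    (H0 : Matrix (Fin n) (Fin k) ℝ)
    (obj : Matrix (Fin n) (Fin k) ℝ → ℝ)
    (hobj : ∀ H, obj H =
      (1 - α) * (∑ i, ∑ j, (H i j - H0 i j) ^ 2) +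
        α * Matrix.trace (Hᵀ * L * H))
    (Hstar : Matrix (Fin n) (Fin k) ℝ)
    (hHstar : Hstar = ∑' ℓ : ℕ, ((1 - α) * α ^ ℓ) • (Atil ^ ℓ * H0)) :
    (∀ H, obj Hstar ≤ obj H) ∧
      (∀ H, obj H = obj Hstar → H = Hstar) ∧
      Hstar = (1 - α) • ((1 - α • Atil)⁻¹ * H0) := by
  have hα' : |α| < 1 := abs_lt.mpr ⟨by linarith [hα.1], hα.2⟩
  have hA : ∀ i j, 0 ≤ A i j := fun i j => (h01 i j).elim (·.ge) fun h => h ▸ zero_le_one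
  obtain rfl : d = fun i => ∑ j, A i j := funext hd
  obtain rfl : Atil = normalizedAdjacency A := Matrix.ext hAtil
  have hM := posDef_one_sub_smul_normalizedAdjacency hA hsymm hdpos hα'
  have hclosed : Hstar = (1 - α) • ((1 - α • normalizedAdjacency A)⁻¹ * H0) := by
    rw [hHstar, ← ((hasSum_smul_normalizedAdjacency_pow_mul hA hsymm hdpos hα' H0).const_smul
      (1 - α)).tsum_eq]
    simp only [smul_pow, Matrix.smul_mul, smul_smul]
  have hstationary : (1 - α • normalizedAdjacency A) * Hstar = (1 - α) • H0 := by
    rw [hclosed, Matrix.mul_smul,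
      mul_nonsing_inv_cancel_left _ _ ((isUnit_iff_isUnit_det _).mp hM.isUnit)]
  have hL' : (1 - α) • (1 : Matrix (Fin n) (Fin n) ℝ) + α • L
      = 1 - α • normalizedAdjacency A := by
    rw [hL]; module
  have hquad : ∀ H, obj H = (Hᵀ * (1 - α • normalizedAdjacency A) * H).trace
      - 2 * (Hᵀ * ((1 - α) • H0)).trace + (1 - α) * (H0ᵀ * H0).trace := fun H => by
    rw [hobj, denoising_objective_eq, hL']
  refine ⟨fun H => ?_, fun H hH => ?_, hclosed⟩
  · rcases eq_or_ne H Hstar with rfl | hne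
    · rfl
    · rw [hquad, hquad]
      linarith [trace_quadratic_lt_of_posDef hM hstationary hne]
  · by_contra hne
    rw [hquad, hquad] at hH
    linarith [trace_quadratic_lt_of_posDef hM hstationary hne]
end

section
/- Suppose for each node t the approximate diffused value satisfies 0 ≤ Σ_{j} σ'_j π(j,t) − ρ°_t ≤ ε d(t), where σ'_j = Σ_i π'_i s(i,j) d(j) with 0 ≤ π(s,i) − π'_i ≤ ε d(i) for all i, and 0 ≤ s(i,j) ≤ 1 is symmetric. Then the normalized estimate ρ'_t = ρ°_t/d(t) satisfies 0 ≤ ρ_t − ρ'_t ≤ (1 + Σ_i d(i)·max_j s(i,j))·ε, where ρ_t = Σ_{i,j} π(s,i) s(i,j) π(t,j) is the exact bidirectional diffusion distribution. -/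
/-!
Since `A` is symmetric, `P = D⁻¹A` satisfies detailed balance `D P = Pᵀ D`, which passes to
every power of `P` and hence to the RWR matrix: `d x π(x,y) = d y π(y,x)`. This turns the
diffusion `∑ⱼ σ'ⱼ π(j,t)` into `d t ∑ᵢ π'ᵢ wᵢ` with `wᵢ = ∑ⱼ s(i,j) π(t,j)`, so
`ρ_t - ρ'_t = ∑ᵢ (π(s,i) - π'ᵢ) wᵢ + (∑ⱼ σ'ⱼ π(j,t) - ρ°_t) / d t`. The rows of `π` are
probability vectors, so `0 ≤ wᵢ ≤ maxⱼ s(i,j)`, and both error terms are controlled by `ε`.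
-/

open Finset Matrix

namespace Matrix

variable {ι : Type*} [Fintype ι] [DecidableEq ι]

theorem semiconjBy_diagonal_transpose_iff {d : ι → ℝ} {M : Matrix ι ι ℝ} :
    SemiconjBy (diagonal d) M Mᵀ ↔ ∀ x y, d x * M x y = d y * M y x := by
  simp only [SemiconjBy, ← Matrix.ext_iff, diagonal_mul, mul_diagonal, transpose_apply,
    mul_comm (M _ _) (d _)]

theorem _root_.SemiconjBy.diagonal_transpose_pow {d : ι → ℝ} {P : Matrix ι ι ℝ}
    (h : SemiconjBy (diagonal d) P Pᵀ) (ℓ : ℕ) : SemiconjBy (diagonal d) (P ^ ℓ) (P ^ ℓ)ᵀ := by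
  simpa only [transpose_pow] using h.pow_right ℓ

theorem mem_rowStochastic_of_div_rowSum {A P : Matrix ι ι ℝ} {d : ι → ℝ}
    (hA : ∀ i j, 0 ≤ A i j) (hd : ∀ i, d i = ∑ j, A i j) (hdpos : ∀ i, 0 < d i)
    (hP : ∀ i j, P i j = A i j / d i) : P ∈ rowStochastic ℝ ι := by
  refine mem_rowStochastic_iff_sum.2 ⟨fun i j => ?_, fun i => ?_⟩
  · rw [hP]
    exact div_nonneg (hA i j) (hdpos i).le
  · simp only [hP, ← sum_div, ← hd, div_self (hdpos i).ne']

theorem semiconjBy_diagonal_of_div_rowSum {A P : Matrix ι ι ℝ} {d : ι → ℝ} (hA : A.IsSymm)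
    (hdpos : ∀ i, 0 < d i) (hP : ∀ i j, P i j = A i j / d i) :
    SemiconjBy (diagonal d) P Pᵀ := by
  refine semiconjBy_diagonal_transpose_iff.2 fun x y => ?_
  rw [hP, hP, mul_div_cancel₀ _ (hdpos x).ne', mul_div_cancel₀ _ (hdpos y).ne', hA.apply]

noncomputable def randomWalkRestart (α : ℝ) (P : Matrix ι ι ℝ) : Matrix ι ι ℝ :=
  fun x y => ∑' ℓ : ℕ, (1 - α) * α ^ ℓ * (P ^ ℓ) x y

variable {α : ℝ} {P : Matrix ι ι ℝ}

theorem summable_randomWalkRestart (hP : P ∈ rowStochastic ℝ ι) (hα0 : 0 ≤ α) (hα1 : α < 1)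
    (x y : ι) : Summable fun ℓ : ℕ => (1 - α) * α ^ ℓ * (P ^ ℓ) x y := by
  have hPℓ (ℓ : ℕ) : P ^ ℓ ∈ rowStochastic ℝ ι := pow_mem hP ℓ
  have hcoef (ℓ : ℕ) : 0 ≤ (1 - α) * α ^ ℓ := mul_nonneg (by linarith) (pow_nonneg hα0 ℓ)
  refine Summable.of_nonneg_of_le (fun ℓ => mul_nonneg (hcoef ℓ) (nonneg_of_mem_rowStochastic
    (hPℓ ℓ))) (fun ℓ => mul_le_of_le_one_right (hcoef ℓ) (le_one_of_mem_rowStochastic (hPℓ ℓ)))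
    ((summable_geometric_of_lt_one hα0 hα1).mul_left (1 - α))

theorem randomWalkRestart_mem_rowStochastic (hP : P ∈ rowStochastic ℝ ι) (hα0 : 0 ≤ α)
    (hα1 : α < 1) : randomWalkRestart α P ∈ rowStochastic ℝ ι := by
  have hPℓ (ℓ : ℕ) : P ^ ℓ ∈ rowStochastic ℝ ι := pow_mem hP ℓ
  refine mem_rowStochastic_iff_sum.2 ⟨fun x y => tsum_nonneg fun ℓ => ?_, fun x => ?_⟩
  · exact mul_nonneg (mul_nonneg (by linarith) (pow_nonneg hα0 ℓ))
      (nonneg_of_mem_rowStochastic (hPℓ ℓ))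
  · calc ∑ y, randomWalkRestart α P x y
        = ∑' ℓ : ℕ, ∑ y, (1 - α) * α ^ ℓ * (P ^ ℓ) x y :=
          (Summable.tsum_finsetSum fun y _ => summable_randomWalkRestart hP hα0 hα1 x y).symm
      _ = ∑' ℓ : ℕ, (1 - α) * α ^ ℓ := by
          simp only [← mul_sum, sum_row_of_mem_rowStochastic (hPℓ _), mul_one]
      _ = 1 := by
          rw [tsum_mul_left, tsum_geometric_of_lt_one hα0 hα1, mul_inv_cancel₀ (by linarith)]

theorem _root_.SemiconjBy.diagonal_transpose_randomWalkRestart {d : ι → ℝ}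
    (h : SemiconjBy (diagonal d) P Pᵀ) (α : ℝ) :
    SemiconjBy (diagonal d) (randomWalkRestart α P) (randomWalkRestart α P)ᵀ := by
  refine semiconjBy_diagonal_transpose_iff.2 fun x y => ?_
  simp only [randomWalkRestart, ← tsum_mul_left, mul_left_comm (d _),
    semiconjBy_diagonal_transpose_iff.1 (h.diagonal_transpose_pow _) x y]

end Matrix

section

variable {ι : Type*} [Fintype ι]

theorem sum_mul_le_sup' [Nonempty ι] (f q : ι → ℝ) (hq : ∀ j, 0 ≤ q j) (hq1 : ∑ j, q j = 1) :
    ∑ j, f j * q j ≤ univ.sup' univ_nonempty f :=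
  calc ∑ j, f j * q j ≤ ∑ j, univ.sup' univ_nonempty f * q j :=
        sum_le_sum fun j _ => mul_le_mul_of_nonneg_right (le_sup' f (mem_univ j)) (hq j)
    _ = univ.sup' univ_nonempty f := by rw [← mul_sum, hq1, mul_one]

theorem sum_weighted_mul_eq_of_reversible {d : ι → ℝ} {π : Matrix ι ι ℝ}
    (hrev : ∀ x y, d x * π x y = d y * π y x) (p : ι → ℝ) (s : ι → ι → ℝ) (t : ι) :
    ∑ j, (∑ i, p i * s i j) * d j * π j t = d t * ∑ i, p i * ∑ j, s i j * π t j := by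
  simp only [mul_assoc, hrev _ t, sum_mul, mul_sum]
  rw [sum_comm]
  exact sum_congr rfl fun i _ => sum_congr rfl fun j _ => by ring

theorem sum_sum_sub_div_eq_of_reversible {d : ι → ℝ} {π : Matrix ι ι ℝ}
    (hrev : ∀ x y, d x * π x y = d y * π y x) (p p' : ι → ℝ) (s : ι → ι → ℝ) (r : ℝ) {t : ι}
    (ht : d t ≠ 0) :
    ∑ i, ∑ j, p i * s i j * π t j - r / d t =
      ∑ i, (p i - p' i) * ∑ j, s i j * π t j +
        (∑ j, (∑ i, p' i * s i j) * d j * π j t - r) / d t := by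
  rw [sum_weighted_mul_eq_of_reversible hrev]
  simp only [sub_mul, sum_sub_distrib, mul_assoc, ← mul_sum]
  field_simp
  ring

end

theorem laca_accuracy_general {n : ℕ} [NeZero n] (A : Matrix (Fin n) (Fin n) ℝ)
    (hsymm : A.IsSymm) (h01 : ∀ i j, A i j = 0 ∨ A i j = 1)
    (d : Fin n → ℝ) (hd : ∀ i, d i = ∑ j, A i j) (hdpos : ∀ i, 0 < d i)
    (P : Matrix (Fin n) (Fin n) ℝ) (hP : ∀ i j, P i j = A i j / d i)
    (α : ℝ) (hα : α ∈ Set.Ioo (0 : ℝ) 1) (ε : ℝ)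
    (π : Fin n → Fin n → ℝ)
    (hπ : ∀ x y, π x y = ∑' ℓ : ℕ, (1 - α) * α ^ ℓ * (P ^ ℓ) x y)
    (s : Fin n → Fin n → ℝ)
    (hs01 : ∀ i j, 0 ≤ s i j ∧ s i j ≤ 1)
    (vs : Fin n)
    (π' : Fin n → ℝ)
    (hπ'err : ∀ i, 0 ≤ π vs i - π' i ∧ π vs i - π' i ≤ ε * d i)
    (σ' : Fin n → ℝ) (hσ' : ∀ j, σ' j = (∑ i, π' i * s i j) * d j)
    (ρ0 : Fin n → ℝ)
    (hρ0 : ∀ t, 0 ≤ (∑ j, σ' j * π j t) - ρ0 t ∧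
      (∑ j, σ' j * π j t) - ρ0 t ≤ ε * d t)
    (ρ' : Fin n → ℝ) (hρ' : ∀ t, ρ' t = ρ0 t / d t)
    (ρ : Fin n → ℝ)
    (hρ : ∀ t, ρ t = ∑ i, ∑ j, π vs i * s i j * π t j) :
    ∀ t, 0 ≤ ρ t - ρ' t ∧
      ρ t - ρ' t ≤
        (1 + ∑ i, d i * Finset.univ.sup' Finset.univ_nonempty (s i)) * ε := by
  intro t
  have hπP : π = randomWalkRestart α P := funext₂ hπ
  have hπsto : π ∈ rowStochastic ℝ (Fin n) := hπP ▸ randomWalkRestart_mem_rowStochastic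
    (mem_rowStochastic_of_div_rowSum (fun i j => by rcases h01 i j with h | h <;> simp [h])
      hd hdpos hP) hα.1.le hα.2
  have hπrev : ∀ x y, d x * π x y = d y * π y x := semiconjBy_diagonal_transpose_iff.1 <|
    hπP ▸ (semiconjBy_diagonal_of_div_rowSum hsymm hdpos hP).diagonal_transpose_randomWalkRestart α
  have hw_nonneg (i : Fin n) : 0 ≤ ∑ j, s i j * π t j :=
    sum_nonneg fun j _ => mul_nonneg (hs01 i j).1 (nonneg_of_mem_rowStochastic hπsto)
  have hw_le (i : Fin n) : ∑ j, s i j * π t j ≤ univ.sup' univ_nonempty (s i) :=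
    sum_mul_le_sup' _ _ (fun _ => nonneg_of_mem_rowStochastic hπsto)
      (sum_row_of_mem_rowStochastic hπsto t)
  have hseed_nonneg : 0 ≤ ∑ i, (π vs i - π' i) * ∑ j, s i j * π t j :=
    sum_nonneg fun i _ => mul_nonneg (hπ'err i).1 (hw_nonneg i)
  have hseed_le : ∑ i, (π vs i - π' i) * ∑ j, s i j * π t j ≤
      ε * ∑ i, d i * univ.sup' univ_nonempty (s i) := by
    rw [mul_sum]
    refine sum_le_sum fun i _ => ?_
    rw [← mul_assoc]
    exact mul_le_mul (hπ'err i).2 (hw_le i) (hw_nonneg i) ((hπ'err i).1.trans (hπ'err i).2)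
  have hround_nonneg := div_nonneg (hρ0 t).1 (hdpos t).le
  have hround_le : ((∑ j, σ' j * π j t) - ρ0 t) / d t ≤ ε :=
    (div_le_iff₀ (hdpos t)).2 (hρ0 t).2
  simp only [hσ'] at hround_nonneg hround_le
  rw [hρ, hρ', sum_sum_sub_div_eq_of_reversible hπrev _ π' s _ (hdpos t).ne']
  constructor <;> linarith

/-- Accuracy guarantee of LACA: on a finite graph with transition matrix
`P = D⁻¹A`, degrees `d i > 0`, restart factor `α ∈ (0,1)` and RWR scores `π`,
let `s` be a symmetric similarity with values in `[0,1]`, `π'` a nonnegative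
approximation of the seed's RWR vector with `0 ≤ π vs i - π' i ≤ ε d i`,
`σ' j = (∑ i, π' i * s i j) * d j` the RWR-SNAS vector, and `ρ°` an approximate
diffusion of `σ'` with `0 ≤ ∑ j, σ' j * π j t - ρ° t ≤ ε d t`. Then the
normalized estimate `ρ' t = ρ° t / d t` of the exact bidirectional diffusion
distribution `ρ t = ∑ i, ∑ j, π vs i * s i j * π t j` satisfies
`0 ≤ ρ t - ρ' t ≤ (1 + ∑ i, d i * max_j s i j) * ε`. -/
theorem laca_accuracy {n : ℕ} [NeZero n] (A : Matrix (Fin n) (Fin n) ℝ)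
    (hsymm : A.IsSymm) (h01 : ∀ i j, A i j = 0 ∨ A i j = 1)
    (d : Fin n → ℝ) (hd : ∀ i, d i = ∑ j, A i j) (hdpos : ∀ i, 0 < d i)
    (P : Matrix (Fin n) (Fin n) ℝ) (hP : ∀ i j, P i j = A i j / d i)
    (α : ℝ) (hα : α ∈ Set.Ioo (0 : ℝ) 1) (ε : ℝ) (hε : 0 < ε)
    (π : Fin n → Fin n → ℝ)
    (hπ : ∀ x y, π x y = ∑' ℓ : ℕ, (1 - α) * α ^ ℓ * (P ^ ℓ) x y)
    (s : Fin n → Fin n → ℝ)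
    (hs01 : ∀ i j, 0 ≤ s i j ∧ s i j ≤ 1) (hssymm : ∀ i j, s i j = s j i)
    (vs : Fin n)
    (π' : Fin n → ℝ) (hπ'nonneg : ∀ i, 0 ≤ π' i)
    (hπ'err : ∀ i, 0 ≤ π vs i - π' i ∧ π vs i - π' i ≤ ε * d i)
    (σ' : Fin n → ℝ) (hσ' : ∀ j, σ' j = (∑ i, π' i * s i j) * d j)
    (ρ0 : Fin n → ℝ)
    (hρ0 : ∀ t, 0 ≤ (∑ j, σ' j * π j t) - ρ0 t ∧
      (∑ j, σ' j * π j t) - ρ0 t ≤ ε * d t)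
    (ρ' : Fin n → ℝ) (hρ' : ∀ t, ρ' t = ρ0 t / d t)
    (ρ : Fin n → ℝ)
    (hρ : ∀ t, ρ t = ∑ i, ∑ j, π vs i * s i j * π t j) :
    ∀ t, 0 ≤ ρ t - ρ' t ∧
      ρ t - ρ' t ≤
        (1 + ∑ i, d i * Finset.univ.sup' Finset.univ_nonempty (s i)) * ε :=
  laca_accuracy_general A hsymm h01 d hd hdpos P hP α hα ε π hπ s hs01 vs π' hπ'err σ' hσ' ρ0 hρ0 ρ'
    hρ' ρ hρ
end
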